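/- arXiv:2312.03975 — 3 statements merged into one kernel-verified Lean document; each statement's English description precedes it below -/
import Mathlib

section
/- Let n ≥ 2k ≥ 4, let V be an n-dimensional vector space over F_q, and let wt : points(V) → ℝ be such that the weight of every k-dimensional subspace (the sum of the weights of its points) lies in {0,1}. Suppose the total number of k-spaces of weight 1 equals x·[n-1 choose k-1]_q. Then for every point P: 0 ≤ wt(P) + ([k-1]_q/[n-1]_q)·(x - wt(P)) ≤ 1, where [a]_q = (q^a - 1)/(q-1). -/
open Module

/-- The total weight of the points of a subspace `S`. -/
noncomputable def subWeight {F V : Type} [Field F] [AddCommGroup V] [Module F V]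
    (wt : Submodule F V → ℝ) (S : Submodule F V) : ℝ :=
  ∑ᶠ P ∈ {P : Submodule F V | finrank F P = 1 ∧ P ≤ S}, wt P

/-- The `q`-analog `[a]_q = (q^a - 1)/(q - 1)`, as a real number. -/
noncomputable def qAna (q a : ℕ) : ℝ := ((q : ℝ) ^ a - 1) / ((q : ℝ) - 1)

/-- The Gaussian binomial coefficient `[a choose b]_q`, as a real number. -/
noncomputable def qBinom (q a b : ℕ) : ℝ :=
  ∏ i ∈ Finset.range b, qAna q (a - i) / qAna q (i + 1)

/-!
Double counting. Summing `subWeight` over all `k`-spaces counts every point `[n-1 choose k-1]_q`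
times, so the points have total weight `x`. Summing it over the `k`-spaces through `P` counts `P`
itself `[n-1 choose k-1]_q` times and every other point `[n-2 choose k-2]_q` times; since each
summand is `0` or `1`, this sum is the number of weight-one `k`-spaces through `P`, hence lies
between `0` and `[n-1 choose k-1]_q`. Dividing by `[n-1 choose k-1]_q` and using
`[n-2 choose k-2]_q / [n-1 choose k-1]_q = [k-1]_q / [n-1]_q` gives the bounds.
-/

open Finset

section QAnalog

variable {q : ℕ} (hq : 1 < q)
include hq

lemma qAna_pos {a : ℕ} (ha : 1 ≤ a) : 0 < qAna q a := by
  have hq' : (1 : ℝ) < q := by exact_mod_cast hq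
  exact div_pos (by linarith [one_lt_pow₀ hq' (by omega : a ≠ 0)]) (by linarith)

lemma qBinom_pos {a b : ℕ} (hb : b ≤ a) : 0 < qBinom q a b :=
  prod_pos fun i hi => div_pos (qAna_pos hq (by simp at hi; omega)) (qAna_pos hq (by omega))

lemma pow_sub_pow_eq_mul_qAna {a i : ℕ} (hi : i ≤ a) :
    (q : ℝ) ^ a - q ^ i = q ^ i * (q - 1) * qAna q (a - i) := by
  have hq' : (q : ℝ) - 1 ≠ 0 := by
    have : (1 : ℝ) < q := by exact_mod_cast hq
    linarith
  rw [qAna, mul_assoc, mul_div_cancel₀ _ hq', mul_sub, ← pow_add, Nat.add_sub_cancel' hi,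
    mul_one]

lemma qBinom_eq_prod_div {a b : ℕ} (hb : b ≤ a) :
    qBinom q a b = (∏ i ∈ range b, ((q : ℝ) ^ a - q ^ i))
      / ∏ i ∈ range b, ((q : ℝ) ^ b - q ^ i) := by
  have hfactor : ∀ c, b ≤ c → ∏ i ∈ range b, ((q : ℝ) ^ c - q ^ i)
      = (∏ i ∈ range b, (q : ℝ) ^ i * (q - 1)) * ∏ i ∈ range b, qAna q (c - i) := by
    intro c hc
    rw [← prod_mul_distrib]
    exact prod_congr rfl fun i hi => pow_sub_pow_eq_mul_qAna hq (by simp at hi; omega)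
  have hreflect : ∏ i ∈ range b, qAna q (b - i) = ∏ i ∈ range b, qAna q (i + 1) := by
    rw [← prod_range_reflect]
    exact prod_congr rfl fun i hi => by simp at hi; congr 1; omega
  have hne : ∏ i ∈ range b, (q : ℝ) ^ i * (q - 1) ≠ 0 := by
    have : (1 : ℝ) < q := by exact_mod_cast hq
    exact prod_ne_zero_iff.2 fun i _ => mul_ne_zero (by positivity) (by linarith)
  rw [hfactor a hb, hfactor b le_rfl, hreflect, mul_div_mul_left _ _ hne, qBinom, prod_div_distrib]

lemma qBinom_succ_succ_mul_qAna (a b : ℕ) :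
    qBinom q (a + 1) (b + 1) * qAna q (b + 1) = qAna q (a + 1) * qBinom q a b := by
  have hden : ∏ i ∈ range b, qAna q (i + 1) ≠ 0 :=
    prod_ne_zero_iff.2 fun i _ => (qAna_pos hq (by omega)).ne'
  have hb : qAna q (b + 1) ≠ 0 := (qAna_pos hq (by omega)).ne'
  simp only [qBinom, prod_div_distrib, prod_range_succ' (fun i => qAna q (a + 1 - i)),
    prod_range_succ (fun i => qAna q (i + 1)), Nat.add_sub_add_right, Nat.sub_zero]
  field_simp

end QAnalog

section Subspaces

variable {K V : Type*} [Field K] [AddCommGroup V] [Module K V] [FiniteDimensional K V]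

noncomputable def linearIndependentSpanEquiv {j : ℕ} (S : Submodule K V) (hS : finrank K S = j) :
    {s : {s : Fin j → V // LinearIndependent K s} // Submodule.span K (Set.range s.1) = S} ≃
      {t : Fin j → S // LinearIndependent K t} where
  toFun s := ⟨fun i => ⟨s.1.1 i, s.2.le (Submodule.subset_span (Set.mem_range_self i))⟩,
    .of_comp S.subtype s.1.2⟩
  invFun t := ⟨⟨S.subtype ∘ t.1, t.2.map' S.subtype S.ker_subtype⟩, by
    have hspan : Submodule.span K (Set.range t.1) = ⊤ :=
      Submodule.eq_top_of_finrank_eq (by rw [finrank_span_eq_card t.2, Fintype.card_fin, hS])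
    rw [Set.range_comp, ← Submodule.map_span, hspan, Submodule.map_subtype_top]⟩
  left_inv _ := rfl
  right_inv _ := rfl

lemma finrank_comap_mkQ (P : Submodule K V) (T : Submodule K (V ⧸ P)) :
    finrank K (T.comap P.mkQ) = finrank K T + finrank K P := by
  set S := T.comap P.mkQ
  have hPS : P ≤ S := fun v hv => by simp [S, (Submodule.Quotient.mk_eq_zero P).2 hv]
  have hrank := LinearMap.finrank_range_add_finrank_ker (P.mkQ.domRestrict S)
  rwa [LinearMap.range_domRestrict, Submodule.map_comap_eq_of_surjective P.mkQ_surjective,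
    LinearMap.ker_domRestrict, Submodule.ker_mkQ,
    (Submodule.comapSubtypeEquivOfLe hPS).finrank_eq, eq_comm] at hrank

noncomputable def subspacesAboveEquiv (P : Submodule K V) (j : ℕ) :
    {T : Submodule K (V ⧸ P) // finrank K T = j} ≃
      {S : Submodule K V // finrank K S = j + finrank K P ∧ P ≤ S} where
  toFun T := ⟨T.1.comap P.mkQ, by rw [finrank_comap_mkQ, T.2], fun v hv => by
    simp [(Submodule.Quotient.mk_eq_zero P).2 hv]⟩
  invFun S := ⟨S.1.map P.mkQ, by
    have h := finrank_comap_mkQ P (S.1.map P.mkQ)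
    rw [Submodule.comap_map_mkQ, sup_eq_right.2 S.2.2, S.2.1] at h
    omega⟩
  left_inv T := Subtype.ext (Submodule.map_comap_eq_of_surjective P.mkQ_surjective T.1)
  right_inv S := Subtype.ext (by simp only [Submodule.comap_map_mkQ, sup_eq_right.2 S.2.2])

end Subspaces

section SubspaceCount

variable {K V : Type*} [Field K] [Fintype K] [AddCommGroup V] [Module K V] [FiniteDimensional K V]

/-- Each `j`-space is the span of exactly as many independent `j`-tuples of `V` as there are
independent `j`-tuples in `K^j`. -/
lemma card_subspaces_finrank_eq_mul {j : ℕ} (hj : j ≤ finrank K V) :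
    Nat.card {S : Submodule K V // finrank K S = j}
        * ∏ i : Fin j, (Fintype.card K ^ j - Fintype.card K ^ i.val)
      = ∏ i : Fin j, (Fintype.card K ^ finrank K V - Fintype.card K ^ i.val) := by
  have : Finite V := Module.finite_of_finite K
  have : Fintype (Submodule K V) := Fintype.ofFinite _
  let spanOf (s : {s : Fin j → V // LinearIndependent K s}) :
      {S : Submodule K V // finrank K S = j} :=
    ⟨Submodule.span K (Set.range s.1), by rw [finrank_span_eq_card s.2, Fintype.card_fin]⟩
  have hfiber (S) : Nat.card {s // spanOf s = S}
      = ∏ i : Fin j, (Fintype.card K ^ j - Fintype.card K ^ i.val) := by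
    rw [Nat.card_congr ((Equiv.subtypeEquivRight fun _ => Subtype.ext_iff).trans
      (linearIndependentSpanEquiv S.1 S.2)), card_linearIndependent S.2.ge, S.2]
  rw [← card_linearIndependent hj, ← Nat.card_congr (Equiv.sigmaFiberEquiv spanOf),
    Nat.card_sigma, sum_congr rfl fun S _ => hfiber S, sum_const, card_univ, smul_eq_mul,
    Nat.card_eq_fintype_card]

lemma card_subspaces_finrank_eq {j : ℕ} (hj : j ≤ finrank K V) :
    (Nat.card {S : Submodule K V // finrank K S = j} : ℝ)
      = qBinom (Fintype.card K) (finrank K V) j := by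
  have hq : 1 < Fintype.card K := Fintype.one_lt_card
  have hcast : ∀ c, j ≤ c →
      ((∏ i : Fin j, (Fintype.card K ^ c - Fintype.card K ^ i.val) : ℕ) : ℝ)
      = ∏ i ∈ range j, ((Fintype.card K : ℝ) ^ c - Fintype.card K ^ i) := by
    intro c hc
    rw [Fin.prod_univ_eq_prod_range (fun i => Fintype.card K ^ c - Fintype.card K ^ i),
      Nat.cast_prod]
    refine prod_congr rfl fun i hi => ?_
    rw [Nat.cast_sub (Nat.pow_le_pow_right hq.le (by simp at hi; omega))]
    push_cast; rfl
  have hpos : 0 < ∏ i ∈ range j, ((Fintype.card K : ℝ) ^ j - Fintype.card K ^ i) :=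
    prod_pos fun i hi => sub_pos.2 (pow_lt_pow_right₀ (by exact_mod_cast hq) (by simpa using hi))
  rw [qBinom_eq_prod_div hq hj, eq_div_iff hpos.ne', ← hcast j le_rfl, ← hcast _ hj,
    ← Nat.cast_mul, card_subspaces_finrank_eq_mul hj]

lemma card_subspaces_finrank_eq_and_le (W : Submodule K V) {k : ℕ} (hWk : finrank K W ≤ k)
    (hk : k ≤ finrank K V) :
    (Nat.card {S : Submodule K V // finrank K S = k ∧ W ≤ S} : ℝ)
      = qBinom (Fintype.card K) (finrank K V - finrank K W) (k - finrank K W) := by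
  have hcard := Nat.card_congr (subspacesAboveEquiv W (k - finrank K W))
  rw [Nat.sub_add_cancel hWk] at hcard
  rw [← hcard, card_subspaces_finrank_eq (by rw [Submodule.finrank_quotient]; omega),
    Submodule.finrank_quotient]

end SubspaceCount

lemma Finset.sum_eq_card_filter_of_forall_eq_zero_or_eq_one {ι : Type*} {s : Finset ι}
    {f : ι → ℝ}
    (hf : ∀ i ∈ s, f i = 0 ∨ f i = 1) : ∑ i ∈ s, f i = #{i ∈ s | f i = 1} := by
  rw [← sum_boole]
  refine sum_congr rfl fun i hi => ?_
  rcases hf i hi with h | h <;> simp [h]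

lemma finrank_sup_eq_two_of_ne {K V : Type*} [Field K] [AddCommGroup V] [Module K V]
    [FiniteDimensional K V] {P Q : Submodule K V}
    (hP : finrank K P = 1) (hQ : finrank K Q = 1) (hPQ : P ≠ Q) : finrank K ↥(P ⊔ Q) = 2 := by
  have hdisj := (Submodule.isAtom_iff_finrank_eq_one.2 hP).disjoint_of_ne
    (Submodule.isAtom_iff_finrank_eq_one.2 hQ) hPQ
  have := Submodule.finrank_sup_add_finrank_inf_eq P Q
  rw [hdisj.eq_bot, finrank_bot, hP, hQ] at this
  omega

section Weights

open scoped Classical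

variable {F V : Type} [Field F] [AddCommGroup V] [Module F V] [Fintype (Submodule F V)]

variable (F V) in
noncomputable def subspacesOfFinrank (k : ℕ) : Finset (Submodule F V) := {S | finrank F S = k}

lemma card_subspacesOfFinrank_filter (k : ℕ) (p : Submodule F V → Prop) :
    #{S ∈ subspacesOfFinrank F V k | p S}
      = Nat.card {S : Submodule F V // finrank F S = k ∧ p S} := by
  rw [subspacesOfFinrank, filter_filter, Nat.card_eq_fintype_card, Fintype.card_subtype]

variable (wt : Submodule F V → ℝ)

lemma subWeight_eq_sum (S : Submodule F V) :
    subWeight wt S = ∑ Q ∈ subspacesOfFinrank F V 1 with Q ≤ S, wt Q := by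
  rw [subWeight, ← finsum_mem_coe_finset, coe_filter]
  simp [subspacesOfFinrank]

lemma sum_subWeight_eq_sum_card_mul (𝒜 : Finset (Submodule F V)) :
    ∑ S ∈ 𝒜, subWeight wt S
      = ∑ Q ∈ subspacesOfFinrank F V 1, #{S ∈ 𝒜 | Q ≤ S} * wt Q := by
  simp_rw [subWeight_eq_sum, sum_filter]
  rw [sum_comm]
  refine sum_congr rfl fun Q _ => ?_
  rw [← sum_filter, sum_const, nsmul_eq_mul]

end Weights

section PointWeights

open scoped Classical

variable {F V : Type} [Field F] [Fintype F] [AddCommGroup V] [Module F V] [FiniteDimensional F V]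
  [Fintype (Submodule F V)] (wt : Submodule F V → ℝ) {k : ℕ}

lemma card_subspacesOfFinrank_filter_le (W : Submodule F V) (hWk : finrank F W ≤ k)
    (hk : k ≤ finrank F V) :
    (#{S ∈ subspacesOfFinrank F V k | W ≤ S} : ℝ)
      = qBinom (Fintype.card F) (finrank F V - finrank F W) (k - finrank F W) := by
  rw [card_subspacesOfFinrank_filter, card_subspaces_finrank_eq_and_le W hWk hk]

lemma sum_wt_eq_of_subWeight_eq_zero_or_one (hk1 : 1 ≤ k) (hk : k ≤ finrank F V)
    (hbool : ∀ S ∈ subspacesOfFinrank F V k, subWeight wt S = 0 ∨ subWeight wt S = 1)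
    {x : ℝ}
    (hsize : (#{S ∈ subspacesOfFinrank F V k | subWeight wt S = 1} : ℝ)
      = x * qBinom (Fintype.card F) (finrank F V - 1) (k - 1)) :
    ∑ Q ∈ subspacesOfFinrank F V 1, wt Q = x := by
  have hA := qBinom_pos (Fintype.one_lt_card (α := F)) (show k - 1 ≤ finrank F V - 1 by omega)
  have hcount : ∀ Q ∈ subspacesOfFinrank F V 1,
      (#{S ∈ subspacesOfFinrank F V k | Q ≤ S} : ℝ)
      = qBinom (Fintype.card F) (finrank F V - 1) (k - 1) := fun Q hQ => by
    have hQ : finrank F Q = 1 := by simpa [subspacesOfFinrank] using hQ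
    rw [card_subspacesOfFinrank_filter_le Q (hQ ▸ hk1) hk, hQ]
  have h := sum_subWeight_eq_sum_card_mul wt (subspacesOfFinrank F V k)
  rw [sum_eq_card_filter_of_forall_eq_zero_or_eq_one hbool, hsize,
    sum_congr rfl fun Q hQ => by rw [hcount Q hQ], ← mul_sum, mul_comm] at h
  exact (mul_left_cancel₀ hA.ne' h).symm

lemma sum_subWeight_filter_le_eq (hk2 : 2 ≤ k) (hk : k ≤ finrank F V) {P : Submodule F V}
    (hP : finrank F P = 1) :
    ∑ S ∈ subspacesOfFinrank F V k with P ≤ S, subWeight wt S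
      = qBinom (Fintype.card F) (finrank F V - 1) (k - 1) * wt P
        + qBinom (Fintype.card F) (finrank F V - 2) (k - 2)
          * (∑ Q ∈ subspacesOfFinrank F V 1, wt Q - wt P) := by
  have hcount : ∀ Q ∈ subspacesOfFinrank F V 1,
      (#{S ∈ {S ∈ subspacesOfFinrank F V k | P ≤ S} | Q ≤ S} : ℝ)
        = if Q = P then qBinom (Fintype.card F) (finrank F V - 1) (k - 1)
          else qBinom (Fintype.card F) (finrank F V - 2) (k - 2) := by
    intro Q hQ
    have hQ : finrank F Q = 1 := by simpa [subspacesOfFinrank] using hQ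
    rw [filter_filter]
    split_ifs with hQP
    · subst hQP
      simp_rw [and_self]
      rw [card_subspacesOfFinrank_filter_le Q (by omega) hk, hQ]
    · have hsup := finrank_sup_eq_two_of_ne hP hQ (Ne.symm hQP)
      simp_rw [← sup_le_iff]
      rw [card_subspacesOfFinrank_filter_le (P ⊔ Q) (by omega) hk, hsup]
  have hP_mem : P ∈ subspacesOfFinrank F V 1 := by simpa [subspacesOfFinrank] using hP
  rw [sum_subWeight_eq_sum_card_mul, sum_congr rfl fun Q hQ => by rw [hcount Q hQ],
    ← add_sum_erase _ _ hP_mem, ← add_sum_erase _ _ hP_mem, if_pos rfl,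
    sum_congr rfl fun Q hQ => by rw [if_neg (ne_of_mem_erase hQ)], ← mul_sum]
  ring

lemma sum_subWeight_filter_le_eq_mul (hk2 : 2 ≤ k) (hk : k ≤ finrank F V) {P : Submodule F V}
    (hP : finrank F P = 1) :
    ∑ S ∈ subspacesOfFinrank F V k with P ≤ S, subWeight wt S
      = qBinom (Fintype.card F) (finrank F V - 1) (k - 1)
        * (wt P + qAna (Fintype.card F) (k - 1) / qAna (Fintype.card F) (finrank F V - 1)
          * (∑ Q ∈ subspacesOfFinrank F V 1, wt Q - wt P)) := by
  have hq : 1 < Fintype.card F := Fintype.one_lt_card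
  have hratio := qBinom_succ_succ_mul_qAna hq (finrank F V - 2) (k - 2)
  rw [show finrank F V - 2 + 1 = finrank F V - 1 by omega, show k - 2 + 1 = k - 1 by omega]
    at hratio
  have := (qAna_pos hq (show 1 ≤ finrank F V - 1 by omega)).ne'
  rw [sum_subWeight_filter_le_eq wt hk2 hk hP]
  field_simp
  linear_combination (wt P - ∑ Q ∈ subspacesOfFinrank F V 1, wt Q) * hratio

lemma sum_subWeight_filter_le_nonneg_and_le (hk1 : 1 ≤ k) (hk : k ≤ finrank F V)
    (hbool : ∀ S ∈ subspacesOfFinrank F V k, subWeight wt S = 0 ∨ subWeight wt S = 1)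
    {P : Submodule F V} (hP : finrank F P = 1) :
    0 ≤ ∑ S ∈ subspacesOfFinrank F V k with P ≤ S, subWeight wt S ∧
      ∑ S ∈ subspacesOfFinrank F V k with P ≤ S, subWeight wt S
        ≤ qBinom (Fintype.card F) (finrank F V - 1) (k - 1) := by
  rw [sum_eq_card_filter_of_forall_eq_zero_or_eq_one fun S hS => hbool S (mem_filter.1 hS).1,
    ← hP, ← card_subspacesOfFinrank_filter_le P (by omega) hk]
  exact ⟨Nat.cast_nonneg _, by exact_mod_cast card_filter_le _ _⟩

end PointWeights

/-- Bounds on point weights of a Boolean degree 1 function on `J_q(n,k)` of size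
`x·[n-1 choose k-1]_q`. -/
theorem stmt_4 (q n k : ℕ) (F V : Type) [Field F] [Fintype F] (hq : Fintype.card F = q)
    [AddCommGroup V] [Module F V] (hk : 2 ≤ k) (hn : 2 * k ≤ n) (hdim : finrank F V = n)
    (wt : Submodule F V → ℝ)
    (hbool : ∀ S : Submodule F V, finrank F S = k →
      subWeight wt S = 0 ∨ subWeight wt S = 1)
    (x : ℝ)
    (hsize : (Nat.card {S : Submodule F V // finrank F S = k ∧ subWeight wt S = 1} : ℝ)
      = x * qBinom q (n - 1) (k - 1)) :
    ∀ P : Submodule F V, finrank F P = 1 →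
      0 ≤ wt P + qAna q (k - 1) / qAna q (n - 1) * (x - wt P) ∧
      wt P + qAna q (k - 1) / qAna q (n - 1) * (x - wt P) ≤ 1 := by
  subst hq hdim
  intro P hP
  have : FiniteDimensional F V := .of_finrank_pos (by omega)
  have : Finite V := Module.finite_of_finite F
  have : Fintype (Submodule F V) := Fintype.ofFinite _
  have hbool' : ∀ S ∈ subspacesOfFinrank F V k, subWeight wt S = 0 ∨ subWeight wt S = 1 :=
    fun S hS => hbool S (by simpa [subspacesOfFinrank] using hS)
  have htotal := sum_wt_eq_of_subWeight_eq_zero_or_one wt (by omega) (by omega) hbool'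
    (by rwa [card_subspacesOfFinrank_filter])
  obtain ⟨hnonneg, hle⟩ :=
    sum_subWeight_filter_le_nonneg_and_le wt (by omega) (by omega) hbool' hP
  rw [sum_subWeight_filter_le_eq_mul wt hk (by omega) hP, htotal] at hnonneg hle
  have hA := qBinom_pos (Fintype.one_lt_card (α := F)) (show k - 1 ≤ finrank F V - 1 by omega)
  exact ⟨nonneg_of_mul_nonneg_right hnonneg hA, (mul_le_iff_le_one_right hA).1 hle⟩
end

section
/- For every prime power q and positive integers k, δ, there exists N such that for every F_q-vector space V of dimension ≥ N, every hyperplane H of V, and every coloring of the points of V not in H with δ colors, there is a k-dimensional subspace K ⊄ H all of whose points outside H have the same color. -/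
/-!
Choose a functional `φ` with kernel `H` and a vector `e` with `φ e = 1`. The points outside `H`
are the lines spanned by the vectors of the affine hyperplane `φ = 1`, which contains an affine
copy `x ↦ e + B x` of `F^m` for every `m < dim V`. A combinatorial subspace of `F^m` of dimension
`k - 1` is an affine subspace, so its image spans a `k`-space `K ⊄ H` whose points outside `H` are
exactly the lines through the image. Hence the multidimensional Hales–Jewett theorem, applied to
the induced colouring of `F^m`, yields the monochromatic `K`.
-/

open Module Submodule LinearMap

namespace Combinatorics.Subspace

theorem exists_mono_in_high_dimension_fin_of_card_eq (q : ℕ) (κ η : Type*) [Finite κ]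
    [Finite η] :
    ∃ n, ∀ (α : Type*) [Fintype α], Fintype.card α = q →
      ∀ C : (Fin n → α) → κ, ∃ l : Subspace η α (Fin n), l.IsMono C := by
  obtain ⟨n, hn⟩ := exists_mono_in_high_dimension_fin (Fin q) κ η
  refine ⟨n, fun α _ hα C => ?_⟩
  let eα := Fintype.equivFinOfCardEq hα
  obtain ⟨l, hl⟩ := hn fun x => C (eα.symm ∘ x)
  exact ⟨l.reindex (.refl _) eα.symm (.refl _), reindex_isMono.mpr hl⟩

variable {η ι R : Type*} [Semiring R]

def linearPart (l : Subspace η R ι) : (η → R) →ₗ[R] ι → R :=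
  LinearMap.pi fun i => (l.idxFun i).elim (fun _ => 0) LinearMap.proj

theorem apply_eq_apply_zero_add_linearPart (l : Subspace η R ι) (x : η → R) :
    l x = l 0 + l.linearPart x := by
  funext i
  rcases h : l.idxFun i with a | e
  · simp [apply_inl h, linearPart, h]
  · simp [apply_inr h, linearPart, h]

theorem linearPart_injective (l : Subspace η R ι) : Function.Injective l.linearPart := by
  intro x y hxy
  funext e
  obtain ⟨i, hi⟩ := l.proper e
  simpa [linearPart, hi] using congr_fun hxy i

end Combinatorics.Subspace

section Hyperplane

variable {F V : Type*} [Field F] [AddCommGroup V] [Module F V]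

theorem Submodule.exists_surjective_ker_eq_of_finrank_add_one [FiniteDimensional F V]
    {H : Submodule F V} (h : finrank F H + 1 = finrank F V) :
    ∃ φ : V →ₗ[F] F, ker φ = H ∧ Function.Surjective φ := by
  have hquot : finrank F (V ⧸ H) = finrank F F := by
    have := H.finrank_quotient_add_finrank
    rw [finrank_self]
    omega
  let ψ := LinearEquiv.ofFinrankEq _ _ hquot
  refine ⟨ψ.toLinearMap ∘ₗ H.mkQ, ?_, ψ.surjective.comp H.mkQ_surjective⟩
  rw [ker_comp, LinearEquiv.ker, comap_bot, ker_mkQ]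

variable {φ : V →ₗ[F] F}

theorem finrank_span_singleton_eq_one_and_not_le_ker {w : V} (hw : φ w = 1) :
    finrank F (span F {w}) = 1 ∧ ¬ span F {w} ≤ ker φ := by
  have hw0 : w ≠ 0 := by rintro rfl; simp at hw
  refine ⟨finrank_span_singleton hw0, fun h => ?_⟩
  simpa [hw] using h (mem_span_singleton_self w)

theorem exists_eq_span_singleton_of_not_le_ker {P : Submodule F V} (hP : finrank F P = 1)
    (hPφ : ¬ P ≤ ker φ) : ∃ w ∈ P, φ w = 1 ∧ P = span F {w} := by
  obtain ⟨x, hxP, hxφ⟩ := SetLike.not_le_iff_exists.mp hPφ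
  have hφx : φ x ≠ 0 := hxφ
  have hx0 : x ≠ 0 := by rintro rfl; simp at hφx
  have : FiniteDimensional F P := Module.finite_of_finrank_eq_succ hP
  refine ⟨(φ x)⁻¹ • x, P.smul_mem _ hxP, by simp [hφx], ?_⟩
  refine (eq_of_le_of_finrank_le ((span_singleton_le_iff_mem _ _).mpr (P.smul_mem _ hxP)) ?_).symm
  rw [hP, finrank_span_singleton (smul_ne_zero (inv_ne_zero hφx) hx0)]

variable {p : V} {U : Submodule F V}

theorem finrank_span_singleton_sup_of_le_ker [FiniteDimensional F U] (hp : φ p = 1)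
    (hU : U ≤ ker φ) : finrank F ↥(span F {p} ⊔ U) = finrank F U + 1 := by
  have hpU : p ∉ U := fun h => by simpa [hp] using hU h
  have hp0 : p ≠ 0 := by rintro rfl; simp at hp
  have := finrank_sup_add_finrank_inf_eq (span F {p}) U
  rw [(disjoint_span_singleton_of_notMem hpU).symm.eq_bot, finrank_bot,
    finrank_span_singleton hp0] at this
  omega

theorem not_span_singleton_sup_le_ker (hp : φ p = 1) : ¬ span F {p} ⊔ U ≤ ker φ :=
  fun h => (finrank_span_singleton_eq_one_and_not_le_ker hp).2 (le_sup_left.trans h)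

theorem exists_eq_span_add_of_le_span_singleton_sup (hp : φ p = 1) (hU : U ≤ ker φ)
    {P : Submodule F V} (hPK : P ≤ span F {p} ⊔ U) (hP : finrank F P = 1)
    (hPφ : ¬ P ≤ ker φ) :
    ∃ u ∈ U, P = span F {p + u} := by
  obtain ⟨w, hwP, hwφ, rfl⟩ := exists_eq_span_singleton_of_not_le_ker hP hPφ
  obtain ⟨_, ht, u, huU, rfl⟩ := mem_sup.mp (hPK hwP)
  obtain ⟨t, rfl⟩ := mem_span_singleton.mp ht
  have ht1 : t = 1 := by simpa [hp, show φ u = 0 from hU huU] using hwφ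
  exact ⟨u, huU, by rw [ht1, one_smul]⟩

end Hyperplane

theorem stmt_10_general (q k δ : ℕ) (hk : 0 < k) :
    ∃ N : ℕ, ∀ (F V : Type) [Field F] [Fintype F] [AddCommGroup V] [Module F V],
      Fintype.card F = q → ∀ n : ℕ, finrank F V = n → N ≤ n →
      ∀ H : Submodule F V, finrank F H = n - 1 →
      ∀ Δ : {P : Submodule F V // finrank F P = 1 ∧ ¬ P ≤ H} → Fin δ,
        ∃ K : Submodule F V, finrank F K = k ∧ ¬ K ≤ H ∧
          ∀ P₁ P₂ : {P : Submodule F V // finrank F P = 1 ∧ ¬ P ≤ H},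
            (P₁ : Submodule F V) ≤ K → (P₂ : Submodule F V) ≤ K → Δ P₁ = Δ P₂ := by
  obtain ⟨m, hm⟩ :=
    Combinatorics.Subspace.exists_mono_in_high_dimension_fin_of_card_eq q (Fin δ) (Fin (k - 1))
  refine ⟨m + 1, fun F V _ _ _ _ hF n hn hmn H hH Δ => ?_⟩
  have : FiniteDimensional F V := .of_finrank_pos (by omega)
  obtain ⟨φ, rfl, hφ⟩ := exists_surjective_ker_eq_of_finrank_add_one (H := H) (by omega)
  obtain ⟨e, he⟩ := hφ 1
  obtain ⟨B, hB⟩ := finrank_le_iff_exists_linearMap.mp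
    (show finrank F (Fin m → F) ≤ finrank F (ker φ) by rw [finrank_fin_fun]; omega)
  let pt (x : Fin m → F) : V := e + B x
  have hpt (x : Fin m → F) : φ (pt x) = 1 := by simp [pt, he]
  obtain ⟨l, c, hc⟩ :=
    hm F hF fun x => Δ ⟨_, finrank_span_singleton_eq_one_and_not_le_ker (hpt x)⟩
  let A := (ker φ).subtype ∘ₗ B ∘ₗ l.linearPart
  have hAφ : range A ≤ ker φ := by rintro _ ⟨y, rfl⟩; exact (B _).2
  have hA : Function.Injective A :=
    (ker φ).injective_subtype.comp (hB.comp l.linearPart_injective)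
  refine ⟨span F {pt (l 0)} ⊔ range A, ?_, not_span_singleton_sup_le_ker (hpt _), ?_⟩
  · rw [finrank_span_singleton_sup_of_le_ker (hpt _) hAφ, finrank_range_of_inj hA,
      finrank_fin_fun]
    omega
  suffices ∀ P : {P : Submodule F V // finrank F P = 1 ∧ ¬ P ≤ ker φ},
      (P : Submodule F V) ≤ span F {pt (l 0)} ⊔ range A → Δ P = c from
    fun P₁ P₂ h₁ h₂ => (this P₁ h₁).trans (this P₂ h₂).symm
  rintro P hP
  obtain ⟨_, ⟨y, rfl⟩, hPy⟩ :=
    exists_eq_span_add_of_le_span_singleton_sup (hpt _) hAφ hP P.2.1 P.2.2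
  have hline : pt (l 0) + A y = pt (l y) := by
    simp [pt, A, l.apply_eq_apply_zero_add_linearPart y, add_assoc]
  rw [← hc y]
  exact congrArg Δ (Subtype.ext (hPy.trans (by rw [hline])))

/-- Affine Graham–Leeb–Rothschild theorem: for every prime power `q` and positive
integers `k`, `δ`, there is `N` such that for every `F_q`-vector space of dimension
at least `N`, every hyperplane `H`, and every `δ`-coloring of the points outside
`H`, there is a `k`-space `K ⊄ H` all of whose points outside `H` get the same
color. -/
theorem stmt_10 (q k δ : ℕ) (hq : IsPrimePow q) (hk : 0 < k) (hδ : 0 < δ) :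
    ∃ N : ℕ, ∀ (F V : Type) [Field F] [Fintype F] [AddCommGroup V] [Module F V],
      Fintype.card F = q → ∀ n : ℕ, finrank F V = n → N ≤ n →
      ∀ H : Submodule F V, finrank F H = n - 1 →
      ∀ Δ : {P : Submodule F V // finrank F P = 1 ∧ ¬ P ≤ H} → Fin δ,
        ∃ K : Submodule F V, finrank F K = k ∧ ¬ K ≤ H ∧
          ∀ P₁ P₂ : {P : Submodule F V // finrank F P = 1 ∧ ¬ P ≤ H},
            (P₁ : Submodule F V) ≤ K → (P₂ : Submodule F V) ≤ K → Δ P₁ = Δ P₂ :=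
  stmt_10_general q k δ hk
end

section
/- Let q be a prime power, δ, k positive integers, and let n̄₀(k,δ,q) denote the least N such that every δ-coloring of the affine points (points of an N-dimensional F_q-space outside a fixed hyperplane) contains a monochromatic affine k-space. Then n̄₀(k+1, δ, q) > n̄₀(k, δ, q). -/
/-! Projecting `V × F` onto `V` along the point `(0, 1)` pulls a `δ`-colouring of the affine points
of `(V, H)` back to one of `(V × F, H × F)`. The image of a monochromatic affine `(k+1)`-space of
`V × F` is a monochromatic affine space of `V` of dimension `k` or `k + 1`, which contains one of
dimension `k`. Hence `AffineRamsey q δ (k+1) (m+1)` implies `AffineRamsey q δ k m`, so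
`n̄₀(k, δ, q) ≤ n̄₀(k+1, δ, q) - 1`; the subtraction is harmless because `n̄₀(k+1, δ, q) ≥ k + 1`,
a field of order `q` giving spaces of every dimension. -/

open Module

/-- `AffineRamsey q δ k N` says: for every `F_q`-vector space of dimension `N`,
every hyperplane `H`, and every `δ`-coloring of the points outside `H`, there is a
`k`-space not contained in `H` all of whose points outside `H` have the same
color. -/
def AffineRamsey (q δ k N : ℕ) : Prop :=
  ∀ (F V : Type) [Field F] [Fintype F] [AddCommGroup V] [Module F V],
    Fintype.card F = q → finrank F V = N →
    ∀ H : Submodule F V, finrank F H = N - 1 →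
    ∀ Δ : {P : Submodule F V // finrank F P = 1 ∧ ¬ P ≤ H} → Fin δ,
      ∃ K : Submodule F V, finrank F K = k ∧ ¬ K ≤ H ∧
        ∀ P₁ P₂ : {P : Submodule F V // finrank F P = 1 ∧ ¬ P ≤ H},
          (P₁ : Submodule F V) ≤ K → (P₂ : Submodule F V) ≤ K → Δ P₁ = Δ P₂

open Submodule

section AffinePoints

variable {F V W : Type*} [Field F] [AddCommGroup V] [Module F V] [AddCommGroup W] [Module F W]

theorem Submodule.finrank_prod (p : Submodule F V) (p' : Submodule F W) [FiniteDimensional F p]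
    [FiniteDimensional F p'] :
    finrank F (p.prod p') = finrank F p + finrank F p' := by
  rw [← Module.finrank_prod, ← LinearMap.finrank_range_of_inj (f := p.subtype.prodMap p'.subtype)
    (p.injective_subtype.prodMap p'.injective_subtype), LinearMap.range_prodMap, range_subtype,
    range_subtype]

theorem Submodule.finrank_le_finrank_map_add_finrank_ker [FiniteDimensional F W]
    (f : W →ₗ[F] V) (K : Submodule F W) :
    finrank F K ≤ finrank F (K.map f) + finrank F (LinearMap.ker f) := by
  have hker : finrank F (LinearMap.ker (f.domRestrict K)) ≤ finrank F (LinearMap.ker f) := by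
    rw [LinearMap.ker_domRestrict,
      (equivMapOfInjective _ K.injective_subtype _).finrank_eq, map_comap_subtype]
    exact finrank_mono inf_le_right
  have := LinearMap.finrank_range_add_finrank_ker (f.domRestrict K)
  rw [LinearMap.range_domRestrict] at this
  omega

theorem Submodule.exists_le_le_finrank_eq [FiniteDimensional F V] {p K : Submodule F V}
    (hpK : p ≤ K) {d : ℕ} (hpd : finrank F p ≤ d) (hdK : d ≤ finrank F K) :
    ∃ L, p ≤ L ∧ L ≤ K ∧ finrank F L = d := by
  induction d, hpd using Nat.le_induction with
  | base => exact ⟨p, le_rfl, hpK, rfl⟩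
  | succ d _ ih =>
    obtain ⟨L, hpL, hLK, rfl⟩ := ih (by omega)
    obtain ⟨x, hxK, hxL⟩ := SetLike.exists_of_lt (hLK.lt_of_ne (by rintro rfl; omega))
    exact ⟨L ⊔ F ∙ x, le_sup_of_le_left hpL, sup_le hLK ((span_singleton_le_iff_mem _ _).2 hxK),
      finrank_sup_span_singleton hxL⟩

theorem Submodule.exists_le_finrank_eq_not_le [FiniteDimensional F V] {K H : Submodule F V}
    {k : ℕ} (hk : 0 < k) (hkK : k ≤ finrank F K) (hKH : ¬ K ≤ H) :
    ∃ L ≤ K, finrank F L = k ∧ ¬ L ≤ H := by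
  obtain ⟨v, hvK, hvH⟩ := SetLike.not_le_iff_exists.1 hKH
  have hv : v ≠ 0 := by rintro rfl; exact hvH H.zero_mem
  obtain ⟨L, hvL, hLK, hL⟩ := exists_le_le_finrank_eq ((span_singleton_le_iff_mem _ _).2 hvK)
    (by rw [finrank_span_singleton hv]; omega) hkK
  exact ⟨L, hLK, hL, fun hLH => hvH (hLH ((span_singleton_le_iff_mem _ _).1 hvL))⟩

abbrev AffinePoint (H : Submodule F V) : Type _ :=
  {P : Submodule F V // finrank F P = 1 ∧ ¬ P ≤ H}

def IsMonochromatic {H : Submodule F V} {C : Type*} (Δ : AffinePoint H → C)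
    (K : Submodule F V) : Prop :=
  ∀ P₁ P₂ : AffinePoint H, P₁.1 ≤ K → P₂.1 ≤ K → Δ P₁ = Δ P₂

theorem IsMonochromatic.mono {H : Submodule F V} {C : Type*} {Δ : AffinePoint H → C}
    {K L : Submodule F V} (hK : IsMonochromatic Δ K) (hLK : L ≤ K) : IsMonochromatic Δ L :=
  fun P₁ P₂ h₁ h₂ => hK P₁ P₂ (h₁.trans hLK) (h₂.trans hLK)

variable {H : Submodule F V} (f : W →ₗ[F] V)

theorem finrank_map_eq_one_of_not_le_comap {P : Submodule F W} (hP : finrank F P = 1)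
    (hPH : ¬ P ≤ H.comap f) : finrank F (P.map f) = 1 := by
  have : Module.Finite F P := Module.finite_of_finrank_pos (by omega)
  have hne : P.map f ≠ ⊥ := fun h => hPH (map_le_iff_le_comap.1 (h ▸ bot_le))
  have := finrank_map_le f P
  have := mt finrank_eq_zero.1 hne
  omega

def AffinePoint.map (P : AffinePoint (H.comap f)) : AffinePoint H :=
  ⟨P.1.map f, finrank_map_eq_one_of_not_le_comap f P.2.1 P.2.2,
    fun h => P.2.2 (map_le_iff_le_comap.1 h)⟩

theorem AffinePoint.exists_map_eq {K : Submodule F W} (P : AffinePoint H) (hPK : P.1 ≤ K.map f) :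
    ∃ P' : AffinePoint (H.comap f), P'.1 ≤ K ∧ P'.map f = P := by
  obtain ⟨v, hvP, hv⟩ := exists_mem_ne_zero_of_ne_bot (p := P.1)
    fun h => by have h1 := P.2.1; rw [h, finrank_bot] at h1; omega
  obtain ⟨w, hwK, rfl⟩ := hPK hvP
  have hPw : (F ∙ w).map f = P.1 := by
    rw [map_span, Set.image_singleton, ← eq_span_singleton_of_mem_of_finrank_eq_one P.2.1 hvP hv]
  have hw : w ≠ 0 := by rintro rfl; exact hv (map_zero f)
  refine ⟨⟨F ∙ w, finrank_span_singleton hw, fun h => P.2.2 ?_⟩,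
    (span_singleton_le_iff_mem _ _).2 hwK, Subtype.ext hPw⟩
  rw [← hPw]
  exact map_le_iff_le_comap.2 h

theorem IsMonochromatic.map {C : Type*} {Δ : AffinePoint H → C} {K : Submodule F W}
    (hK : IsMonochromatic (Δ ∘ AffinePoint.map f) K) : IsMonochromatic Δ (K.map f) := by
  intro P₁ P₂ h₁ h₂
  obtain ⟨P₁', hP₁'K, rfl⟩ := P₁.exists_map_eq f h₁
  obtain ⟨P₂', hP₂'K, rfl⟩ := P₂.exists_map_eq f h₂
  exact hK P₁' P₂' hP₁'K hP₂'K

end AffinePoints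

theorem AffineRamsey.of_succ {q δ k m : ℕ} (hk : 0 < k) (hm : 0 < m)
    (h : AffineRamsey q δ (k + 1) (m + 1)) : AffineRamsey q δ k m := by
  intro F V _ _ _ _ hq hV H hH Δ
  have : FiniteDimensional F V := .of_finrank_pos (by omega)
  let f := LinearMap.fst F V F
  -- `Δ ∘ AffinePoint.map f` is the colouring `Q ↦ Δ(⟨P, Q⟩ ∩ V)` with `P = (0, 1)`; as `P` lies in
  -- the hyperplane `H.comap f = H × F`, it needs no colour of its own.
  have hH' : finrank F (H.comap f) = m + 1 - 1 := by
    rw [comap_fst, Submodule.finrank_prod, hH, finrank_top, finrank_self]; omega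
  obtain ⟨K, hK, hKH, hKΔ⟩ :=
    h F (V × F) hq (by simp [hV]) (H.comap f) hH' (Δ ∘ AffinePoint.map f)
  have hker : finrank F (LinearMap.ker f) = 1 := by
    rw [LinearMap.ker_fst, LinearMap.finrank_range_of_inj LinearMap.inr_injective, finrank_self]
  have hkK : k ≤ finrank F (K.map f) := by
    have := finrank_le_finrank_map_add_finrank_ker f K
    omega
  obtain ⟨L, hLK, hL, hLH⟩ := exists_le_finrank_eq_not_le hk hkK (by rwa [map_le_iff_le_comap])
  exact ⟨L, hL, hLH, (IsMonochromatic.map f hKΔ).mono hLK⟩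

theorem AffineRamsey.le {q δ j N : ℕ} (hq : IsPrimePow q) (hδ : 0 < δ)
    (h : AffineRamsey q δ j N) : j ≤ N := by
  obtain ⟨p, n, hp, hn, rfl⟩ := hq
  have := Fact.mk hp.nat_prime
  let _ : Fintype (GaloisField p n) := .ofFinite _
  let V := Fin N → GaloisField p n
  obtain ⟨H, -, -, hH⟩ := exists_le_le_finrank_eq (d := N - 1)
    (bot_le (a := (⊤ : Submodule (GaloisField p n) V))) (by simp) (by simp [V])
  obtain ⟨K, hK, -⟩ := h _ V (by rw [← Nat.card_eq_fintype_card, GaloisField.card p n hn.ne'])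
    (by simp [V]) H hH (fun _ => ⟨0, hδ⟩)
  exact hK ▸ (finrank_le K).trans (by simp [V])

/-- The affine Ramsey number is strictly monotone in `k`:
`n̄₀(k+1, δ, q) > n̄₀(k, δ, q)`. -/
theorem stmt_11 (q δ k : ℕ) (hq : IsPrimePow q) (hδ : 0 < δ) (hk : 0 < k)
    (nk nk1 : ℕ)
    (hnk : IsLeast {N | AffineRamsey q δ k N} nk)
    (hnk1 : IsLeast {N | AffineRamsey q δ (k + 1) N} nk1) :
    nk < nk1 := by
  have hk1 : k + 1 ≤ nk1 := AffineRamsey.le hq hδ hnk1.1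
  obtain ⟨m, rfl⟩ : ∃ m, nk1 = m + 1 := ⟨nk1 - 1, by omega⟩
  exact Nat.lt_succ_of_le (hnk.2 (AffineRamsey.of_succ hk (by omega) hnk1.1))
end
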